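/- With the setup of the previous statement and |M| ≥ 3: each subspace L_α = {f ∈ G^n_α : ω(f,g)=0 ∀g ∈ S_loc} is isotropic, i.e., ω(f,g) = 0 for all f,g ∈ L_α. -/

import Mathlib

/-- The phase space of `ι`-indexed qubits: `G^ι = (F_2 × F_2)^ι`. -/
abbrev PV (ι : Type*) := ι → ZMod 2 × ZMod 2

/-- The standard symplectic form `ω(f,g) = Σ_j (f_j^x g_j^z + f_j^z g_j^x)`. -/
noncomputable def sympForm (ι : Type*) [Fintype ι] :
    LinearMap.BilinForm (ZMod 2) (PV ι) :=
  LinearMap.mk₂ (ZMod 2)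
    (fun f g => ∑ j, ((f j).1 * (g j).2 + (f j).2 * (g j).1))
    (fun m₁ m₂ g => by
      rw [← Finset.sum_add_distrib]
      exact Finset.sum_congr rfl fun j _ => by
        simp only [Pi.add_apply, Prod.fst_add, Prod.snd_add]; ring)
    (fun c m g => by
      simp only [Pi.smul_apply, Prod.smul_fst, Prod.smul_snd, smul_eq_mul]
      rw [Finset.mul_sum]
      exact Finset.sum_congr rfl fun j _ => by ring)
    (fun m g₁ g₂ => by
      rw [← Finset.sum_add_distrib]
      exact Finset.sum_congr rfl fun j _ => by
        simp only [Pi.add_apply, Prod.fst_add, Prod.snd_add]; ring)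
    (fun c m g => by
      simp only [Pi.smul_apply, Prod.smul_fst, Prod.smul_snd, smul_eq_mul]
      rw [Finset.mul_sum]
      exact Finset.sum_congr rfl fun j _ => by ring)

/-- The restriction of the symplectic form to the coordinates in `A`:
`ω(f_A, g_A)`. -/
def sympOn {ι : Type*} (A : Finset ι) (f g : PV ι) : ZMod 2 :=
  ∑ j ∈ A, ((f j).1 * (g j).2 + (f j).2 * (g j).1)

/-- The set of qubits owned by party `α`. -/
def partySet {ι M : Type*} [Fintype ι] [DecidableEq M] (party : ι → M) (α : M) :
    Finset ι := Finset.univ.filter (fun j => party j = α)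

/-- The local subspace `G^n_α` of vectors supported on party `α`'s qubits. -/
def localSub {ι M : Type*} (party : ι → M) (α : M) :
    Submodule (ZMod 2) (PV ι) where
  carrier := {f | ∀ j, party j ≠ α → f j = 0}
  add_mem' := fun hf hg j hj => by
    simp only [Pi.add_apply, hf j hj, hg j hj, add_zero]
  zero_mem' := fun j _ => rfl
  smul_mem' := fun c f hf j hj => by
    simp only [Pi.smul_apply, hf j hj, smul_zero]

/-- The co-local subgroup `S_α̂` of elements of `S` acting trivially on party `α`. -/
def colocalSub {ι M : Type*} (S : Submodule (ZMod 2) (PV ι)) (party : ι → M) (α : M) :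
    Submodule (ZMod 2) (PV ι) :=
  S ⊓ { carrier := {f | ∀ j, party j = α → f j = 0}
        add_mem' := fun hf hg j hj => by
          simp only [Pi.add_apply, hf j hj, hg j hj, add_zero]
        zero_mem' := fun j _ => rfl
        smul_mem' := fun c f hf j hj => by
          simp only [Pi.smul_apply, hf j hj, smul_zero] }

/-- `S_loc`, the sum of all co-local subgroups of `S`. -/
def Sloc {ι M : Type*} (S : Submodule (ZMod 2) (PV ι)) (party : ι → M) :
    Submodule (ZMod 2) (PV ι) :=
  ⨆ α : M, colocalSub S party α

/-- The subspace `L_α = {f ∈ G^n_α : ω(f, S_loc) = 0}`. -/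
noncomputable def Lsub {ι M : Type*} [Fintype ι] (S : Submodule (ZMod 2) (PV ι))
    (party : ι → M) (α : M) : Submodule (ZMod 2) (PV ι) :=
  localSub party α ⊓ LinearMap.BilinForm.orthogonal (sympForm ι) (Sloc S party)


section Aux

variable {ι : Type*} [Fintype ι] [DecidableEq ι]

lemma sympForm_apply (f g : PV ι) :
    sympForm ι f g = ∑ j, ((f j).1 * (g j).2 + (f j).2 * (g j).1) := rfl

lemma sympForm_comm (f g : PV ι) : sympForm ι f g = sympForm ι g f := by
  simp only [sympForm_apply]
  exact Finset.sum_congr rfl fun j _ => by ring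

lemma sympForm_isRefl : (sympForm ι).IsRefl := fun f g h => by
  rwa [sympForm_comm]

lemma sympForm_single (f : PV ι) (j : ι) (v : ZMod 2 × ZMod 2) :
    sympForm ι f (Pi.single j v) = (f j).1 * v.2 + (f j).2 * v.1 := by
  rw [sympForm_apply, Finset.sum_eq_single j]
  · rw [Pi.single_eq_same]
  · intro k _ hk
    rw [Pi.single_eq_of_ne hk]
    simp
  · intro h; exact absurd (Finset.mem_univ j) h

lemma sympForm_nondeg : (sympForm ι).Nondegenerate := by
  have key : ∀ f : PV ι, (∀ g, sympForm ι f g = 0) → f = 0 := by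
    intro f hf
    funext j
    have h1 := hf (Pi.single j ((0 : ZMod 2), (1 : ZMod 2)))
    have h2 := hf (Pi.single j ((1 : ZMod 2), (0 : ZMod 2)))
    rw [sympForm_single] at h1 h2
    simp only [mul_one, mul_zero, add_zero, zero_add] at h1 h2
    have : f j = (0, 0) := Prod.ext h1 h2
    exact this
  exact ⟨key, fun y hy => key y fun x => by rw [sympForm_comm]; exact hy x⟩

/-- The subspace of vectors vanishing on party `γ`'s qubits. -/
def coSub {M : Type*} (party : ι → M) (γ : M) : Submodule (ZMod 2) (PV ι) where
  carrier := {f | ∀ j, party j = γ → f j = 0}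
  add_mem' := fun hf hg j hj => by
    simp only [Pi.add_apply, hf j hj, hg j hj, add_zero]
  zero_mem' := fun j _ => rfl
  smul_mem' := fun c f hf j hj => by
    simp only [Pi.smul_apply, hf j hj, smul_zero]

lemma mem_coSub {M : Type*} {party : ι → M} {γ : M} {f : PV ι} :
    f ∈ coSub party γ ↔ ∀ j, party j = γ → f j = 0 := Iff.rfl

lemma colocalSub_eq {M : Type*} (S : Submodule (ZMod 2) (PV ι)) (party : ι → M) (γ : M) :
    colocalSub S party γ = S ⊓ coSub party γ := rfl

lemma orthogonal_localSub {M : Type*} (party : ι → M) (γ : M) :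
    (sympForm ι).orthogonal (localSub party γ) = coSub party γ := by
  ext f
  rw [LinearMap.BilinForm.mem_orthogonal_iff, mem_coSub]
  constructor
  · intro hf j hj
    have hmem : ∀ v : ZMod 2 × ZMod 2, Pi.single j v ∈ localSub party γ := by
      intro v k hk
      rcases eq_or_ne k j with rfl | hne
      · exact absurd hj hk
      · exact Pi.single_eq_of_ne (M := fun _ : ι => ZMod 2 × ZMod 2) hne v
    have h1 := hf _ (hmem ((0 : ZMod 2), (1 : ZMod 2)))
    have h2 := hf _ (hmem ((1 : ZMod 2), (0 : ZMod 2)))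
    rw [sympForm_comm, sympForm_single] at h1 h2
    simp only [mul_one, mul_zero, add_zero, zero_add] at h1 h2
    have : f j = (0, 0) := Prod.ext h1 h2
    exact this
  · intro hf g hg
    rw [sympForm_apply]
    refine Finset.sum_eq_zero fun j _ => ?_
    rcases eq_or_ne (party j) γ with h | h
    · rw [hf j h]; simp
    · rw [hg j h]; simp

lemma orthogonal_sup (B : LinearMap.BilinForm (ZMod 2) (PV ι))
    (U V : Submodule (ZMod 2) (PV ι)) :
    B.orthogonal (U ⊔ V) = B.orthogonal U ⊓ B.orthogonal V := by
  ext f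
  simp only [Submodule.mem_inf, LinearMap.BilinForm.mem_orthogonal_iff]
  constructor
  · intro h
    exact ⟨fun u hu => h u (Submodule.mem_sup_left hu),
           fun v hv => h v (Submodule.mem_sup_right hv)⟩
  · rintro ⟨hU, hV⟩ m hm
    obtain ⟨u, hu, v, hv, rfl⟩ := Submodule.mem_sup.mp hm
    have := hU u hu
    have := hV v hv
    rw [map_add, LinearMap.add_apply, hU u hu, hV v hv, add_zero]

end Aux

/-- With at least three parties, each subspace
`L_α = {f ∈ G^n_α : ω(f, S_loc) = 0}` is isotropic. -/
theorem Lsub_isotropic {n : ℕ} {M : Type*} [Fintype M] [DecidableEq M]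
    (party : Fin n → M) (hM : 3 ≤ Fintype.card M)
    (S Sent : Submodule (ZMod 2) (PV (Fin n)))
    (hsd : S = LinearMap.BilinForm.orthogonal (sympForm (Fin n)) S)
    (hfull : ∀ α, S ⊓ localSub party α = ⊥)
    (hsum : Sloc S party ⊔ Sent = S)
    (hdisj : Sloc S party ⊓ Sent = ⊥)
    (α : M) :
    ∀ f ∈ Lsub S party α, ∀ g ∈ Lsub S party α, sympForm (Fin n) f g = 0 := by
  intro f hf g hg
  obtain ⟨hfl, hfo⟩ := Submodule.mem_inf.mp hf
  obtain ⟨hgl, hgo⟩ := Submodule.mem_inf.mp hg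
  -- pick γ ≠ α and β ∉ {α, γ}
  have hnt : Nontrivial M := Fintype.one_lt_card_iff_nontrivial.mp (by omega)
  obtain ⟨γ, hγα⟩ := exists_ne α
  have hcompl : (({α, γ} : Finset M)ᶜ).Nonempty := by
    rw [← Finset.card_pos, Finset.card_compl]
    have h2 : ({α, γ} : Finset M).card ≤ 2 :=
      (Finset.card_insert_le _ _).trans (by simp)
    omega
  obtain ⟨β, hβ⟩ := hcompl
  simp only [Finset.mem_compl, Finset.mem_insert, Finset.mem_singleton, not_or] at hβ
  obtain ⟨hβα, hβγ⟩ := hβ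
  -- `S ⊔ G_γ` is the orthogonal of `S_γ̂`
  have horth : colocalSub S party γ =
      (sympForm (Fin n)).orthogonal (S ⊔ localSub party γ) := by
    rw [orthogonal_sup, colocalSub_eq, ← hsd, orthogonal_localSub]
  have hdouble : S ⊔ localSub party γ =
      (sympForm (Fin n)).orthogonal (colocalSub S party γ) := by
    rw [horth, LinearMap.BilinForm.orthogonal_orthogonal sympForm_nondeg sympForm_isRefl]
  -- `f` lies in `S ⊔ G_γ`
  have hcoloc_le : colocalSub S party γ ≤ Sloc S party := le_iSup _ γ
  have hfmem : f ∈ S ⊔ localSub party γ := by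
    rw [hdouble]
    exact LinearMap.BilinForm.orthogonal_le hcoloc_le hfo
  obtain ⟨s, hs, h, hh, hsh⟩ := Submodule.mem_sup.mp hfmem
  -- `s` vanishes on party `β`'s qubits, hence lies in `S_loc`
  have hsβ : s ∈ colocalSub S party β := by
    refine ⟨hs, fun j hj => ?_⟩
    have hfj : f j = 0 := hfl j (by rw [hj]; exact hβα)
    have hhj : h j = 0 := hh j (by rw [hj]; exact hβγ)
    have : s j + h j = 0 := by rw [← Pi.add_apply, hsh, hfj]
    rwa [hhj, add_zero] at this
  have hsloc : s ∈ Sloc S party := (le_iSup (colocalSub S party) β) hsβ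
  have hsg : sympForm (Fin n) s g = 0 := hgo s hsloc
  -- `h` and `g` have disjoint supports
  have hhg : sympForm (Fin n) h g = 0 := by
    rw [sympForm_apply]
    refine Finset.sum_eq_zero fun j _ => ?_
    rcases eq_or_ne (party j) γ with hc | hc
    · rw [hgl j (by rw [hc]; exact hγα)]; simp
    · rw [hh j hc]; simp
  rw [← hsh, map_add, LinearMap.add_apply, hsg, hhg, add_zero]
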